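/- Let G be a connected triangle-free simple graph on m ≥ 3 vertices. Then 𝔹^m(G;Z) = 0 and 𝔹^{m−1}(G;Z) = 0. -/

import Mathlib

set_option linter.unusedSectionVars false

noncomputable section

open Finset

/-- A finite simplicial complex on a finite vertex set `V`: a collection of nonempty
subsets of `V` (its faces) containing every singleton and closed under nonempty subsets. -/
structure SComplex (V : Type) [DecidableEq V] [Fintype V] where
  faces : Finset (Finset V)
  nonempty_mem : ∀ σ ∈ faces, σ.Nonempty
  singleton_mem : ∀ v : V, ({v} : Finset V) ∈ faces
  down_closed : ∀ σ ∈ faces, ∀ τ ⊆ σ, τ.Nonempty → τ ∈ faces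

variable {V : Type} [Fintype V] [LinearOrder V]

/-- The induced subcomplex `X[W]`: all faces of `X` contained in `W`. -/
def SComplex.induced (X : SComplex V) (W : Finset V) : Finset (Finset V) :=
  X.faces.filter (fun σ => σ ⊆ W)

theorem SComplex.induced_mono (X : SComplex V) {W W' : Finset V} (h : W ⊆ W') :
    X.induced W ⊆ X.induced W' := by
  intro σ hσ
  simp only [SComplex.induced, mem_filter] at *
  exact ⟨hσ.1, hσ.2.trans h⟩

theorem SComplex.induced_down (X : SComplex V) (W : Finset V) :
    ∀ σ ∈ X.induced W, ∀ τ ⊆ σ, τ.Nonempty → τ ∈ X.induced W := by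
  intro σ hσ τ hτ hne
  simp only [SComplex.induced, mem_filter] at *
  exact ⟨X.down_closed σ hσ.1 τ hτ hne, hτ.trans hσ.2⟩

theorem SComplex.empty_not_mem_induced (X : SComplex V) (W : Finset V) :
    (∅ : Finset V) ∉ X.induced W := by
  simp only [SComplex.induced, mem_filter]
  rintro ⟨h, -⟩
  exact absurd (X.nonempty_mem ∅ h) (by simp)

/-- `faceRemove σ k` is `σ` with its `(k+1)`-st smallest element removed. -/
def faceRemove (σ : Finset V) (k : ℕ) : Finset V :=
  ((σ.sort (· ≤ ·)).eraseIdx k).toFinset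

theorem faceRemove_subset (σ : Finset V) (k : ℕ) : faceRemove σ k ⊆ σ := by
  intro x hx
  rw [faceRemove, List.mem_toFinset] at hx
  have : x ∈ σ.sort (· ≤ ·) := List.eraseIdx_subset hx
  rwa [Finset.mem_sort] at this

variable (R : Type) [CommRing R]

/-- The module of `R`-chains supported on the faces of cardinality `n` belonging to `F`
(so of geometric dimension `n - 1`). -/
def Chains (F : Finset (Finset V)) (n : ℕ) : Type :=
  {σ : Finset V // σ ∈ F ∧ σ.card = n} →₀ R

instance (F : Finset (Finset V)) (n : ℕ) : AddCommGroup (Chains R F n) :=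
  inferInstanceAs (AddCommGroup ({σ : Finset V // σ ∈ F ∧ σ.card = n} →₀ R))

instance (F : Finset (Finset V)) (n : ℕ) : Module R (Chains R F n) :=
  inferInstanceAs (Module R ({σ : Finset V // σ ∈ F ∧ σ.card = n} →₀ R))

/-- The basis chain corresponding to a single face. -/
def chainGen (F : Finset (Finset V)) (n : ℕ) (σ : {σ : Finset V // σ ∈ F ∧ σ.card = n}) :
    Chains R F n := Finsupp.single σ (1 : R)

/-- The boundary of a single face of cardinality `i + 1`:
the alternating sum of its codimension-one subfaces. -/
def bdryGen (F : Finset (Finset V)) (i : ℕ) (σ : Finset V) : Chains R F i :=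
  ∑ k ∈ Finset.range (i + 1),
    (-1 : R) ^ k •
      (if h : faceRemove σ k ∈ F ∧ (faceRemove σ k).card = i
        then chainGen R F i ⟨faceRemove σ k, h⟩
        else 0)

/-- The simplicial boundary map, from chains of geometric degree `i` (faces of
cardinality `i + 1`) to chains of geometric degree `i - 1`. -/
def bdry (F : Finset (Finset V)) (i : ℕ) : Chains R F (i + 1) →ₗ[R] Chains R F i :=
  Finsupp.lsum R fun σ => LinearMap.toSpanSingleton R _ (bdryGen R F i σ.1)

/-- The augmentation map, sending each vertex to `1 : R`. -/
def augment (F : Finset (Finset V)) : Chains R F 1 →ₗ[R] R :=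
  Finsupp.lsum R fun _ => LinearMap.id

/-- The submodule of cycles in geometric degree `i`. -/
def cyclesSub (F : Finset (Finset V)) (i : ℕ) : Submodule R (Chains R F (i + 1)) :=
  LinearMap.ker (bdry R F i)

/-- The boundaries, viewed inside the cycles. -/
def bdriesIn (F : Finset (Finset V)) (i : ℕ) : Submodule R (cyclesSub R F i) :=
  (LinearMap.range (bdry R F (i + 1)) ⊓ cyclesSub R F i).comap (cyclesSub R F i).subtype

/-- The simplicial homology `H_i(F; R)` of a family `F` of faces: cycles modulo
boundaries in geometric degree `i`. -/
def simpH (F : Finset (Finset V)) (i : ℕ) : Type :=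
  cyclesSub R F i ⧸ bdriesIn R F i

instance (F : Finset (Finset V)) (i : ℕ) : AddCommGroup (simpH R F i) :=
  inferInstanceAs (AddCommGroup (cyclesSub R F i ⧸ bdriesIn R F i))

instance (F : Finset (Finset V)) (i : ℕ) : Module R (simpH R F i) :=
  inferInstanceAs (Module R (cyclesSub R F i ⧸ bdriesIn R F i))

/-- Reduced cycles: in degree `0` the kernel of the augmentation, in higher degrees the
usual cycles. -/
def redCycles (F : Finset (Finset V)) : (i : ℕ) → Submodule R (Chains R F (i + 1))
  | 0 => LinearMap.ker (augment R F)
  | (i + 1) => LinearMap.ker (bdry R F (i + 1))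

/-- The reduced boundaries, viewed inside the reduced cycles. -/
def redBdriesIn (F : Finset (Finset V)) (i : ℕ) : Submodule R (redCycles R F i) :=
  (LinearMap.range (bdry R F (i + 1)) ⊓ redCycles R F i).comap (redCycles R F i).subtype

/-- Reduced simplicial homology `H̃_i(F; R)`. -/
def redH (F : Finset (Finset V)) (i : ℕ) : Type :=
  redCycles R F i ⧸ redBdriesIn R F i

instance (F : Finset (Finset V)) (i : ℕ) : AddCommGroup (redH R F i) :=
  inferInstanceAs (AddCommGroup (redCycles R F i ⧸ redBdriesIn R F i))

instance (F : Finset (Finset V)) (i : ℕ) : Module R (redH R F i) :=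
  inferInstanceAs (Module R (redCycles R F i ⧸ redBdriesIn R F i))

/-- The chain map induced by an inclusion of families of faces. -/
def chainMap (F F' : Finset (Finset V)) (h : F ⊆ F') (n : ℕ) :
    Chains R F n →ₗ[R] Chains R F' n :=
  Finsupp.lsum R fun σ =>
    LinearMap.toSpanSingleton R _ (chainGen R F' n ⟨σ.1, h σ.2.1, σ.2.2⟩)

theorem bdry_single (F : Finset (Finset V)) (i : ℕ)
    (σ : {σ : Finset V // σ ∈ F ∧ σ.card = i + 1}) (r : R) :
    bdry R F i (Finsupp.single σ r) = r • bdryGen R F i σ.1 := by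
  show (Finsupp.lsum R fun σ => LinearMap.toSpanSingleton R _ (bdryGen R F i σ.1))
      (Finsupp.single σ r) = r • bdryGen R F i σ.1
  rw [Finsupp.lsum_single, LinearMap.toSpanSingleton_apply]

theorem chainMap_single (F F' : Finset (Finset V)) (h : F ⊆ F') (n : ℕ)
    (σ : {σ : Finset V // σ ∈ F ∧ σ.card = n}) (r : R) :
    chainMap R F F' h n (Finsupp.single σ r) =
      Finsupp.single (⟨σ.1, h σ.2.1, σ.2.2⟩ : {σ : Finset V // σ ∈ F' ∧ σ.card = n}) r := by
  show (Finsupp.lsum R fun σ =>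
      LinearMap.toSpanSingleton R _ (chainGen R F' n ⟨σ.1, h σ.2.1, σ.2.2⟩))
      (Finsupp.single σ r) = _
  rw [Finsupp.lsum_single, LinearMap.toSpanSingleton_apply, chainGen]
  first
    | exact Finsupp.smul_single_one _ r
    | (erw [Finsupp.smul_single, smul_eq_mul, mul_one])

theorem chainMap_bdryGen (F F' : Finset (Finset V)) (h : F ⊆ F')
    (hdc : ∀ σ ∈ F, ∀ τ ⊆ σ, τ.Nonempty → τ ∈ F) (hne : (∅ : Finset V) ∉ F') (i : ℕ)
    (σ : Finset V) (hσ : σ ∈ F) :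
    chainMap R F F' h i (bdryGen R F i σ) = bdryGen R F' i σ := by
  unfold bdryGen
  rw [map_sum]
  refine Finset.sum_congr rfl fun k _ => ?_
  rw [map_smul]
  congr 1
  by_cases hc : faceRemove σ k ∈ F ∧ (faceRemove σ k).card = i
  · have hc' : faceRemove σ k ∈ F' ∧ (faceRemove σ k).card = i := ⟨h hc.1, hc.2⟩
    rw [dif_pos hc, dif_pos hc']
    rw [chainGen, chainMap_single]
    rfl
  · have hc' : ¬(faceRemove σ k ∈ F' ∧ (faceRemove σ k).card = i) := by
      rintro ⟨h1, h2⟩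
      refine hc ⟨?_, h2⟩
      have hnonempty : (faceRemove σ k).Nonempty := by
        rcases Finset.eq_empty_or_nonempty (faceRemove σ k) with he | hn
        · rw [he] at h1; exact absurd h1 hne
        · exact hn
      exact hdc σ hσ _ (faceRemove_subset σ k) hnonempty
    rw [dif_neg hc, dif_neg hc']
    rw [map_zero]

theorem bdry_comp_chainMap (F F' : Finset (Finset V)) (h : F ⊆ F')
    (hdc : ∀ σ ∈ F, ∀ τ ⊆ σ, τ.Nonempty → τ ∈ F) (hne : (∅ : Finset V) ∉ F') (i : ℕ) :
    (bdry R F' i).comp (chainMap R F F' h (i + 1)) =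
      (chainMap R F F' h i).comp (bdry R F i) := by
  apply Finsupp.lhom_ext
  intro σ r
  have key : (bdry R F' i) (chainMap R F F' h (i + 1)
        (Finsupp.single σ r : Chains R F (i + 1))) =
      (chainMap R F F' h i) (bdry R F i (Finsupp.single σ r : Chains R F (i + 1))) := by
    rw [chainMap_single, bdry_single, bdry_single, map_smul,
      chainMap_bdryGen R F F' h hdc hne i σ.1 σ.2.1]
  exact key

/-- The map induced on simplicial homology by an inclusion of families of faces. -/
def simpHMap (F F' : Finset (Finset V)) (h : F ⊆ F')
    (hdc : ∀ σ ∈ F, ∀ τ ⊆ σ, τ.Nonempty → τ ∈ F) (hne : (∅ : Finset V) ∉ F') (i : ℕ) :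
    simpH R F i →ₗ[R] simpH R F' i :=
  Submodule.mapQ (bdriesIn R F i) (bdriesIn R F' i)
    ((chainMap R F F' h (i + 1)).restrict (p := cyclesSub R F i) (q := cyclesSub R F' i)
      (fun x hx => by
        have hcomm := congrArg (fun φ => φ x) (bdry_comp_chainMap R F F' h hdc hne i)
        simp only [LinearMap.comp_apply] at hcomm
        simp only [cyclesSub, LinearMap.mem_ker] at hx ⊢
        rw [hcomm, hx, map_zero]))
    (by
      rintro ⟨x, hxker⟩ hx
      simp only [bdriesIn, Submodule.mem_comap, Submodule.mem_inf, Submodule.coe_subtype,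
        LinearMap.mem_range] at hx ⊢
      obtain ⟨⟨y, hy⟩, -⟩ := hx
      constructor
      · refine ⟨chainMap R F F' h (i + 2) y, ?_⟩
        have hcomm := congrArg (fun φ => φ y) (bdry_comp_chainMap R F F' h hdc hne (i + 1))
        simp only [LinearMap.comp_apply] at hcomm
        rw [LinearMap.restrict_coe_apply, hcomm, hy]
      · exact (((chainMap R F F' h (i + 1)).restrict _) ⟨x, hxker⟩).2)

/-- The `j`-th chain module of the weight-`0`, dimension-`i` überhomology complex:
the direct sum over all vertex subsets `S` of cardinality `j` of `H_i(X[S]; R)`. -/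
def UC (X : SComplex V) (i j : ℕ) : Type :=
  DirectSum {S : Finset V // S.card = j} fun S => simpH R (X.induced S.1) i

instance (X : SComplex V) (i j : ℕ) : AddCommGroup (UC R X i j) :=
  inferInstanceAs
    (AddCommGroup (DirectSum {S : Finset V // S.card = j} fun S => simpH R (X.induced S.1) i))

instance (X : SComplex V) (i j : ℕ) : Module R (UC R X i j) :=
  inferInstanceAs
    (Module R (DirectSum {S : Finset V // S.card = j} fun S => simpH R (X.induced S.1) i))

/-- The differential of the weight-`0` überhomology complex; its component from the
summand of `S` to the summand of `S ∪ {v}` (for `v ∉ S`) is `(-1) ^ #{u ∈ S | u < v}`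
times the map induced on homology by the inclusion `X[S] ⊆ X[S ∪ {v}]`. -/
def uberd (X : SComplex V) (i j : ℕ) : UC R X i j →ₗ[R] UC R X i (j + 1) :=
  DirectSum.toModule R _ _ fun S =>
    ∑ v ∈ S.1ᶜ.attach,
      ((-1 : R) ^ (S.1.filter fun u => u < v.1).card) •
        ((DirectSum.lof R {T : Finset V // T.card = j + 1}
              (fun T => simpH R (X.induced T.1) i)
              ⟨insert v.1 S.1, by
                rw [Finset.card_insert_of_notMem (Finset.mem_compl.mp v.2), S.2]⟩).comp
          (simpHMap R (X.induced S.1) (X.induced (insert v.1 S.1))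
            (X.induced_mono (Finset.subset_insert _ _))
            (X.induced_down S.1) (X.empty_not_mem_induced _) i))

/-- The submodule of über-coboundaries in cohomological degree `j`. -/
def uberBdries (X : SComplex V) (i : ℕ) : (j : ℕ) → Submodule R (UC R X i j)
  | 0 => ⊥
  | (j + 1) => LinearMap.range (uberd R X i j)

/-- The über-cocycles in cohomological degree `j`. -/
def uberCycles (X : SComplex V) (i j : ℕ) : Submodule R (UC R X i j) :=
  LinearMap.ker (uberd R X i j)

/-- The über-coboundaries, viewed inside the über-cocycles. -/
def uberBdriesIn (X : SComplex V) (i j : ℕ) : Submodule R (uberCycles R X i j) :=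
  (uberBdries R X i j ⊓ uberCycles R X i j).comap (uberCycles R X i j).subtype

/-- The `0`-degree überhomology `B^j_i(X; R)`: the homology at position `j` of the
cochain complex `(UC R X i •, uberd)`. -/
def uberB (X : SComplex V) (j i : ℕ) : Type :=
  uberCycles R X i j ⧸ uberBdriesIn R X i j

instance (X : SComplex V) (j i : ℕ) : AddCommGroup (uberB R X j i) :=
  inferInstanceAs (AddCommGroup (uberCycles R X i j ⧸ uberBdriesIn R X i j))

instance (X : SComplex V) (j i : ℕ) : Module R (uberB R X j i) :=
  inferInstanceAs (Module R (uberCycles R X i j ⧸ uberBdriesIn R X i j))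

/-- Bold homology `𝔹^j(X; R) := B^j_0(X; R)`. -/
abbrev Bold (X : SComplex V) (j : ℕ) : Type := uberB R X j 0

/-- The Euler characteristic of a simplicial complex. -/
def eulerChar (X : SComplex V) : ℤ := ∑ σ ∈ X.faces, (-1 : ℤ) ^ (σ.card - 1)

/-- The 1-skeleton of a simplicial complex, as a simple graph. -/
def oneSkeleton (X : SComplex V) : SimpleGraph V where
  Adj u v := u ≠ v ∧ ({u, v} : Finset V) ∈ X.faces
  symm := by
    constructor
    intro u v h
    exact ⟨h.1.symm, by rw [Finset.pair_comm]; exact h.2⟩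
  loopless := ⟨fun v h => h.1 rfl⟩

/-- A connected dominating set of a simple graph: a nonempty vertex set inducing a
connected subgraph such that every vertex lies in it or is adjacent to it. -/
def IsConnDomSet (G : SimpleGraph V) (S : Finset V) : Prop :=
  S.Nonempty ∧ (G.induce (S : Set V)).Connected ∧
    ∀ v : V, v ∈ S ∨ ∃ u ∈ S, G.Adj u v

section Classical
open Classical in
/-- A finite simple graph regarded as a 1-dimensional simplicial complex: its faces are
the singletons and the edges. -/
def graphComplex (G : SimpleGraph V) : SComplex V where
  faces := Finset.univ.filter fun σ => (∃ v, σ = {v}) ∨ ∃ u v, G.Adj u v ∧ σ = {u, v}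
  nonempty_mem := by
    intro σ hσ
    simp only [mem_filter, mem_univ, true_and] at hσ
    rcases hσ with ⟨v, rfl⟩ | ⟨u, v, -, rfl⟩
    · exact ⟨v, by simp⟩
    · exact ⟨u, by simp⟩
  singleton_mem := by
    intro v
    simp only [mem_filter, mem_univ, true_and]
    exact Or.inl ⟨v, rfl⟩
  down_closed := by
    intro σ hσ τ hτ hne
    simp only [mem_filter, mem_univ, true_and] at hσ ⊢
    have h1 : 1 ≤ τ.card := Finset.card_pos.mpr hne
    rcases Nat.lt_or_ge τ.card 2 with h2 | h2
    · have hcard : τ.card = 1 := by omega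
      obtain ⟨w, rfl⟩ := Finset.card_eq_one.mp hcard
      exact Or.inl ⟨w, rfl⟩
    · rcases hσ with ⟨v, rfl⟩ | ⟨u, v, hadj, rfl⟩
      · have := Finset.card_le_card hτ
        simp only [Finset.card_singleton] at this
        omega
      · have hcard : ({u, v} : Finset V).card ≤ 2 :=
          (Finset.card_insert_le u {v}).trans (by simp)
        have : τ = {u, v} := Finset.eq_of_subset_of_card_le hτ (by omega)
        exact Or.inr ⟨u, v, hadj, this⟩

open Classical in
/-- The connected domination polynomial of `G` evaluated at `-1`:
`D_c(G)(-1) = Σ_S (-1)^{|S|}` over connected dominating sets `S`. -/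
def cdSum (G : SimpleGraph V) : ℤ :=
  ∑ S ∈ Finset.univ.filter (fun S : Finset V => IsConnDomSet G S), (-1 : ℤ) ^ S.card

end Classical

end

/-- A simple graph is triangle-free if it has no three pairwise adjacent vertices. -/
def TriangleFree {W : Type} (G : SimpleGraph W) : Prop :=
  ∀ a b c : W, G.Adj a b → G.Adj a c → G.Adj b c → False
/-! ### Auxiliary development -/

noncomputable section Aux

open Finset

namespace UberAux

variable {V : Type} [Fintype V] [LinearOrder V]

lemma chains0_empty (X : SComplex V) (W : Finset V) :
    IsEmpty {σ : Finset V // σ ∈ X.induced W ∧ σ.card = 0} := by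
  constructor
  rintro ⟨σ, hσ, hc⟩
  rw [Finset.card_eq_zero] at hc
  subst hc
  exact X.empty_not_mem_induced W hσ

instance (X : SComplex V) (W : Finset V) : Subsingleton (Chains ℤ (X.induced W) 0) := by
  have := chains0_empty X W
  exact inferInstanceAs (Subsingleton ({σ : Finset V // σ ∈ X.induced W ∧ σ.card = 0} →₀ ℤ))

lemma mem_cycles0 (X : SComplex V) (W : Finset V) (c : Chains ℤ (X.induced W) 1) :
    c ∈ cyclesSub ℤ (X.induced W) 0 := by
  simp only [cyclesSub, LinearMap.mem_ker]
  exact Subsingleton.elim _ _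

/-- The class of a `1`-chain in `H₀`. -/
def clsL (X : SComplex V) (W : Finset V) :
    Chains ℤ (X.induced W) 1 →ₗ[ℤ] simpH ℤ (X.induced W) 0 :=
  (bdriesIn ℤ (X.induced W) 0).mkQ.comp
    (LinearMap.codRestrict (cyclesSub ℤ (X.induced W) 0) LinearMap.id
      (fun c => mem_cycles0 X W c))

lemma clsL_surjective (X : SComplex V) (W : Finset V) :
    Function.Surjective (clsL X W) := by
  intro y
  obtain ⟨⟨c, hc⟩, rfl⟩ := Submodule.Quotient.mk_surjective _ y
  exact ⟨c, rfl⟩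

lemma clsL_eq_of_sub_mem (X : SComplex V) (W : Finset V)
    {c d : Chains ℤ (X.induced W) 1}
    (h : c - d ∈ LinearMap.range (bdry ℤ (X.induced W) 1)) :
    clsL X W c = clsL X W d := by
  have : clsL X W c = Submodule.Quotient.mk
      (⟨c, mem_cycles0 X W c⟩ : cyclesSub ℤ (X.induced W) 0) := rfl
  rw [this]
  have : clsL X W d = Submodule.Quotient.mk
      (⟨d, mem_cycles0 X W d⟩ : cyclesSub ℤ (X.induced W) 0) := rfl
  rw [this]
  refine (Submodule.Quotient.eq _).mpr ?_
  simp only [bdriesIn, Submodule.mem_comap, Submodule.mem_inf, Submodule.coe_subtype]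
  constructor
  · exact h
  · exact Submodule.sub_mem _ (mem_cycles0 X W c) (mem_cycles0 X W d)

lemma singleton_mem_induced (X : SComplex V) {W : Finset V} {v : V} (hv : v ∈ W) :
    ({v} : Finset V) ∈ X.induced W := by
  simp only [SComplex.induced, mem_filter]
  exact ⟨X.singleton_mem v, by simpa⟩

/-- The basic `1`-chain given by a vertex. -/
def vtx (X : SComplex V) (W : Finset V) (u : V) (hu : u ∈ W) :
    Chains ℤ (X.induced W) 1 :=
  Finsupp.single ⟨{u}, singleton_mem_induced X hu, Finset.card_singleton u⟩ 1


lemma sort_pair {a b : V} (h : a < b) :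
    ({a, b} : Finset V).sort (· ≤ ·) = [a, b] := by
  have hne : a ∉ ({b} : Finset V) := by simp [h.ne]
  rw [show ({a, b} : Finset V) = insert a {b} from rfl,
    Finset.sort_insert _ (by simpa using h.le) hne, Finset.sort_singleton]

lemma faceRemove_pair_zero {a b : V} (h : a < b) :
    faceRemove ({a, b} : Finset V) 0 = {b} := by
  rw [faceRemove, sort_pair h]
  simp

lemma faceRemove_pair_one {a b : V} (h : a < b) :
    faceRemove ({a, b} : Finset V) 1 = {a} := by
  rw [faceRemove, sort_pair h]
  simp

lemma pair_mem_card {a b : V} (h : a ≠ b) : ({a, b} : Finset V).card = 2 :=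
  Finset.card_pair h

lemma bdryGen_pair (X : SComplex V) (W : Finset V) {a b : V} (hab : a < b)
    (h : ({a, b} : Finset V) ∈ X.induced W) :
    bdryGen ℤ (X.induced W) 1 ({a, b} : Finset V) =
      vtx X W b (by rw [SComplex.induced, Finset.mem_filter] at h; exact h.2 (by simp)) -
        vtx X W a (by rw [SComplex.induced, Finset.mem_filter] at h; exact h.2 (by simp)) := by
  have ha : ({a} : Finset V) ∈ X.induced W :=
    X.induced_down W _ h _ (by simp) ⟨a, by simp⟩
  have hb : ({b} : Finset V) ∈ X.induced W :=
    X.induced_down W _ h _ (by simp [Finset.subset_insert]) ⟨b, by simp⟩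
  rw [bdryGen]
  rw [Finset.sum_range_succ, Finset.sum_range_succ, Finset.sum_range_zero, zero_add]
  simp only [faceRemove_pair_zero hab, faceRemove_pair_one hab]
  rw [dif_pos ⟨hb, Finset.card_singleton b⟩, dif_pos ⟨ha, Finset.card_singleton a⟩]
  simp only [pow_zero, pow_one, one_smul, neg_smul, chainGen, vtx]
  erw [one_smul, neg_one_smul, sub_eq_add_neg]

lemma sub_vtx_mem_range (X : SComplex V) (W : Finset V) {a b : V} (hab : a ≠ b)
    (h : ({a, b} : Finset V) ∈ X.induced W) (ha : a ∈ W) (hb : b ∈ W) :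
    vtx X W a ha - vtx X W b hb ∈ LinearMap.range (bdry ℤ (X.induced W) 1) := by
  rcases lt_or_gt_of_ne hab with hlt | hgt
  · refine ⟨Finsupp.single ⟨{a, b}, h, pair_mem_card hab⟩ (-1), ?_⟩
    rw [bdry_single, bdryGen_pair X W hlt h]
    erw [neg_one_smul, neg_sub]
  · have h' : ({b, a} : Finset V) ∈ X.induced W := by rwa [Finset.pair_comm]
    refine ⟨Finsupp.single ⟨{b, a}, h', pair_mem_card hab.symm⟩ 1, ?_⟩
    rw [bdry_single, bdryGen_pair X W hgt h']
    erw [one_smul]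

lemma augment_single (X : SComplex V) (W : Finset V)
    (σ : {σ : Finset V // σ ∈ X.induced W ∧ σ.card = 1}) (r : ℤ) :
    augment ℤ (X.induced W) (Finsupp.single σ r) = r := by
  show (Finsupp.lsum ℤ fun _ => LinearMap.id) (Finsupp.single σ r) = r
  rw [Finsupp.lsum_single]
  rfl

lemma augment_vtx (X : SComplex V) (W : Finset V) (u : V) (hu : u ∈ W) :
    augment ℤ (X.induced W) (vtx X W u hu) = 1 :=
  augment_single X W _ 1

lemma augment_bdry_eq_zero (X : SComplex V) (W : Finset V)
    (c : Chains ℤ (X.induced W) 2) :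
    augment ℤ (X.induced W) (bdry ℤ (X.induced W) 1 c) = 0 := by
  have key : (augment ℤ (X.induced W)).comp (bdry ℤ (X.induced W) 1) = 0 := by
    apply Finsupp.lhom_ext
    intro σ r
    have h2 : σ.1.card = 2 := σ.2.2
    obtain ⟨a, b, hab, hσ⟩ := Finset.card_eq_two.mp h2
    have hmem : σ.1 ∈ X.induced W := σ.2.1
    have hb1 := bdry_single ℤ (X.induced W) 1 σ r
    show augment ℤ (X.induced W) (bdry ℤ (X.induced W) 1 (Finsupp.single σ r)) = 0
    refine Eq.trans (congrArg (augment ℤ (X.induced W)) hb1) ?_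
    rw [map_smul]
    rcases lt_or_gt_of_ne hab with hlt | hgt
    · rw [hσ] at hmem ⊢
      rw [bdryGen_pair X W hlt hmem, map_sub (augment ℤ (X.induced W)), augment_vtx, augment_vtx]
      simp
    · have hσ' : σ.1 = ({b, a} : Finset V) := by rw [hσ, Finset.pair_comm]
      rw [hσ'] at hmem ⊢
      rw [bdryGen_pair X W hgt hmem, map_sub (augment ℤ (X.induced W)), augment_vtx, augment_vtx]
      simp
  have := congrArg (fun φ => φ c) key
  simpa using this

/-- The augmentation functional on `H₀`. -/
def phiL (X : SComplex V) (W : Finset V) : simpH ℤ (X.induced W) 0 →ₗ[ℤ] ℤ :=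
  Submodule.liftQ _ ((augment ℤ (X.induced W)).comp
      (cyclesSub ℤ (X.induced W) 0).subtype)
    (by
      rintro ⟨x, hx⟩ hmem
      simp only [bdriesIn, Submodule.mem_comap, Submodule.mem_inf,
        Submodule.coe_subtype, LinearMap.mem_range] at hmem
      obtain ⟨⟨y, hy⟩, -⟩ := hmem
      simp only [LinearMap.mem_ker, LinearMap.comp_apply, Submodule.coe_subtype]
      rw [← hy]
      exact augment_bdry_eq_zero X W y)

lemma phiL_clsL (X : SComplex V) (W : Finset V) (c : Chains ℤ (X.induced W) 1) :
    phiL X W (clsL X W c) = augment ℤ (X.induced W) c := rfl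

lemma chainMap_vtx (X : SComplex V) {W W' : Finset V}
    (h : X.induced W ⊆ X.induced W') (u : V) (hu : u ∈ W) (hu' : u ∈ W') :
    chainMap ℤ (X.induced W) (X.induced W') h 1 (vtx X W u hu) = vtx X W' u hu' := by
  rw [vtx, chainMap_single]
  rfl

lemma simpHMap_clsL (X : SComplex V) (W W' : Finset V)
    (h : X.induced W ⊆ X.induced W') (hdc) (hne)
    (c : Chains ℤ (X.induced W) 1) :
    simpHMap ℤ (X.induced W) (X.induced W') h hdc hne 0 (clsL X W c) =
      clsL X W' (chainMap ℤ (X.induced W) (X.induced W') h 1 c) := rfl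

/-- Short name for the inclusion of a `lof` generator into `UC`. -/
def lofU (X : SComplex V) (j : ℕ) (S : Finset V) (hS : S.card = j) :
    simpH ℤ (X.induced S) 0 →ₗ[ℤ] UC ℤ X 0 j :=
  DirectSum.lof ℤ {S : Finset V // S.card = j}
    (fun T => simpH ℤ (X.induced T.1) 0) ⟨S, hS⟩

/-- The elementary class of a vertex `u` in the summand of `S`. -/
def E (X : SComplex V) (j : ℕ) (S : Finset V) (hS : S.card = j) (u : V) (hu : u ∈ S) :
    UC ℤ X 0 j :=
  lofU X j S hS (clsL X S (vtx X S u hu))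

lemma E_cast (X : SComplex V) (j : ℕ) {S S' : Finset V} (hSS' : S = S')
    (hS : S.card = j) (hS' : S'.card = j) (u : V) (hu : u ∈ S) (hu' : u ∈ S') :
    E X j S hS u hu = E X j S' hS' u hu' := by
  subst hSS'
  rfl

lemma uberd_lof (X : SComplex V) (j : ℕ) (S : Finset V) (hS : S.card = j)
    (h : simpH ℤ (X.induced S) 0) :
    uberd ℤ X 0 j (lofU X j S hS h) =
      ∑ z ∈ Sᶜ, (if hz : z ∉ S then
        ((-1 : ℤ) ^ (S.filter (fun u => u < z)).card) •
          lofU X (j + 1) (insert z S)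
            (by rw [Finset.card_insert_of_notMem hz, hS])
            (simpHMap ℤ (X.induced S) (X.induced (insert z S))
              (X.induced_mono (Finset.subset_insert _ _)) (X.induced_down S)
              (X.empty_not_mem_induced _) 0 h)
      else 0) := by
  rw [lofU, uberd]
  refine Eq.trans (DirectSum.toModule_lof ℤ _ _) ?_
  rw [← Finset.sum_attach Sᶜ]
  erw [LinearMap.sum_apply]
  apply Finset.sum_congr rfl
  intro z _
  rw [dif_pos (Finset.mem_compl.mp z.2)]
  rfl

lemma uberd_E (X : SComplex V) (j : ℕ) (S : Finset V) (hS : S.card = j)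
    (u : V) (hu : u ∈ S) :
    uberd ℤ X 0 j (E X j S hS u hu) =
      ∑ z ∈ Sᶜ, (if hz : z ∉ S then
        ((-1 : ℤ) ^ (S.filter (fun w => w < z)).card) •
          E X (j + 1) (insert z S)
            (by rw [Finset.card_insert_of_notMem hz, hS])
            u (Finset.mem_insert_of_mem hu)
      else 0) := by
  rw [E, uberd_lof]
  apply Finset.sum_congr rfl
  intro z hz
  rw [dif_pos (Finset.mem_compl.mp hz), dif_pos (Finset.mem_compl.mp hz)]
  congr 1
  rw [simpHMap_clsL, chainMap_vtx X _ u hu (Finset.mem_insert_of_mem hu)]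
  rfl
/-- The number of vertices smaller than `v`. -/
def pv (v : V) : ℕ := ((Finset.univ : Finset V).filter (· < v)).card

lemma pow_neg_one_congr {a b : ℕ} (h : a % 2 = b % 2) : (-1 : ℤ) ^ a = (-1 : ℤ) ^ b := by
  rcases Nat.even_or_odd a with ha | ha
  · have hb : Even b := by
      rw [Nat.even_iff] at ha ⊢
      omega
    rw [Even.neg_one_pow ha, Even.neg_one_pow hb]
  · have hb : Odd b := by
      rw [Nat.odd_iff] at ha ⊢
      omega
    rw [Odd.neg_one_pow ha, Odd.neg_one_pow hb]

lemma filterlt_compl_self (v : V) :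
    ((({v}ᶜ : Finset V)).filter (· < v)).card = pv v := by
  rw [Finset.compl_singleton, Finset.filter_erase,
    Finset.erase_eq_of_notMem (by simp)]
  rfl

lemma filterlt_pair {v w : V} (hvw : v ≠ w) :
    ((({v, w}ᶜ : Finset V)).filter (· < v)).card + (if w < v then 1 else 0) = pv v := by
  have h1 : ({v, w}ᶜ : Finset V) = (Finset.univ.erase w).erase v := by
    rw [show ({v, w} : Finset V) = insert v {w} from rfl, Finset.compl_insert,
      Finset.compl_singleton]
  rw [h1, Finset.filter_erase, Finset.filter_erase,
    Finset.erase_eq_of_notMem (by simp)]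
  by_cases hwv : w < v
  · rw [Finset.card_erase_of_mem (by simp [hwv]), if_pos hwv]
    have : 0 < (Finset.univ.filter (· < v)).card :=
      Finset.card_pos.mpr ⟨w, by simp [hwv]⟩
    unfold pv
    omega
  · rw [Finset.erase_eq_of_notMem (by simp [hwv]), if_neg hwv]
    rfl

lemma insert_pair_compl_left {v w : V} (hvw : v ≠ w) :
    insert v ({v, w}ᶜ : Finset V) = ({w}ᶜ : Finset V) := by
  ext x
  simp only [Finset.mem_insert, Finset.mem_compl, Finset.mem_insert,
    Finset.mem_singleton]
  constructor
  · rintro (rfl | hx)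
    · exact fun h => hvw h
    · intro h; exact hx (Or.inr h)
  · intro hx
    by_cases hxv : x = v
    · exact Or.inl hxv
    · exact Or.inr (fun h => by rcases h with h | h; exact hxv h; exact hx h)

lemma insert_pair_compl_right {v w : V} (hvw : v ≠ w) :
    insert w ({v, w}ᶜ : Finset V) = ({v}ᶜ : Finset V) := by
  rw [Finset.pair_comm]
  exact insert_pair_compl_left hvw.symm

lemma duE (X : SComplex V) (j : ℕ) (v u : V) (hS : ({v}ᶜ : Finset V).card = j)
    (hU : (Finset.univ : Finset V).card = j + 1) (hu : u ∈ ({v}ᶜ : Finset V)) :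
    uberd ℤ X 0 j (E X j {v}ᶜ hS u hu) =
      (-1 : ℤ) ^ (pv v) • E X (j + 1) Finset.univ hU u (Finset.mem_univ u) := by
  rw [uberd_E, compl_compl, Finset.sum_singleton,
    dif_pos (by simp : ¬ v ∈ ({v}ᶜ : Finset V))]
  rw [show ((({v}ᶜ : Finset V)).filter (fun w => w < v)).card = pv v from
    filterlt_compl_self v]
  congr 1
  exact E_cast X (j + 1) (Finset.insert_compl_self v) _ _ u _ _

lemma ddE (X : SComplex V) (j : ℕ) {v w : V} (hvw : v ≠ w) (u : V)
    (hS : ({v, w}ᶜ : Finset V).card = j)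
    (hSw : ({w}ᶜ : Finset V).card = j + 1) (hSv : ({v}ᶜ : Finset V).card = j + 1)
    (hu : u ∈ ({v, w}ᶜ : Finset V))
    (huw : u ∈ ({w}ᶜ : Finset V)) (huv : u ∈ ({v}ᶜ : Finset V)) :
    uberd ℤ X 0 j (E X j {v, w}ᶜ hS u hu) =
      (-1 : ℤ) ^ ((({v, w}ᶜ : Finset V)).filter (· < v)).card •
          E X (j + 1) {w}ᶜ hSw u huw +
        (-1 : ℤ) ^ ((({v, w}ᶜ : Finset V)).filter (· < w)).card •
          E X (j + 1) {v}ᶜ hSv u huv := by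
  rw [uberd_E, compl_compl, Finset.sum_pair hvw,
    dif_pos (by simp : v ∉ ({v, w}ᶜ : Finset V)),
    dif_pos (by simp : w ∉ ({v, w}ᶜ : Finset V))]
  congr 1
  · congr 1
    exact E_cast X (j + 1) (insert_pair_compl_left hvw) _ _ u _ _
  · congr 1
    exact E_cast X (j + 1) (insert_pair_compl_right hvw) _ _ u _ _
section Graph

variable (G : SimpleGraph V)

lemma adj_pair_mem_induced {a b : V} (hadj : G.Adj a b) {W : Finset V}
    (ha : a ∈ W) (hb : b ∈ W) :
    ({a, b} : Finset V) ∈ (graphComplex G).induced W := by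
  simp only [SComplex.induced, Finset.mem_filter]
  constructor
  · simp only [graphComplex, Finset.mem_filter, Finset.mem_univ, true_and]
    exact Or.inr ⟨a, b, hadj, rfl⟩
  · exact Finset.insert_subset ha (by simpa using hb)

lemma E_edge (j : ℕ) {a b z : V} (hadj : G.Adj a b)
    (hS : ({z}ᶜ : Finset V).card = j)
    (ha : a ∈ ({z}ᶜ : Finset V)) (hb : b ∈ ({z}ᶜ : Finset V)) :
    E (graphComplex G) j {z}ᶜ hS a ha = E (graphComplex G) j {z}ᶜ hS b hb := by
  show lofU (graphComplex G) j _ hS (clsL _ _ (vtx (graphComplex G) _ a ha)) =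
    lofU (graphComplex G) j _ hS (clsL _ _ (vtx (graphComplex G) _ b hb))
  refine congrArg _ (clsL_eq_of_sub_mem _ _ ?_)
  exact sub_vtx_mem_range _ _ hadj.ne (adj_pair_mem_induced G hadj ha hb) ha hb

variable (n : ℕ)

lemma cardCompl1 (hV : Fintype.card V = n + 3) (v : V) :
    ({v}ᶜ : Finset V).card = n + 2 := by
  rw [Finset.card_compl, Finset.card_singleton, hV]
  omega

lemma cardCompl2 (hV : Fintype.card V = n + 3) {v w : V} (hvw : v ≠ w) :
    ({v, w}ᶜ : Finset V).card = n + 1 := by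
  rw [Finset.card_compl, Finset.card_pair hvw, hV]
  omega

lemma cardUniv (hV : Fintype.card V = n + 3) :
    (Finset.univ : Finset V).card = n + 3 := by
  rw [Finset.card_univ, hV]

/-- The normalized elementary generator. -/
abbrev NN (hV : Fintype.card V = n + 3) (v u : V) (hu : u ∈ ({v}ᶜ : Finset V)) :
    UC ℤ (graphComplex G) 0 (n + 2) :=
  ((-1 : ℤ) ^ pv v) • E (graphComplex G) (n + 2) {v}ᶜ (cardCompl1 n hV v) u hu

/-- The range of the second-to-top differential. -/
abbrev Rng : Submodule ℤ (UC ℤ (graphComplex G) 0 (n + 2)) :=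
  LinearMap.range (uberd ℤ (graphComplex G) 0 (n + 1))

lemma smul_NN (hV : Fintype.card V = n + 3) (v u : V) (hu : u ∈ ({v}ᶜ : Finset V)) :
    ((-1 : ℤ) ^ pv v) • NN G n hV v u hu =
      E (graphComplex G) (n + 2) {v}ᶜ (cardCompl1 n hV v) u hu := by
  rw [NN, smul_smul, ← pow_add, show pv v + pv v = 2 * pv v by ring, pow_mul]
  norm_num

lemma ite_lt_sum {v w : V} (hvw : v ≠ w) :
    (if w < v then 1 else 0) + (if v < w then 1 else 0) = 1 := by
  rcases lt_or_gt_of_ne hvw with h | h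
  · rw [if_neg (lt_asymm h), if_pos h]
  · rw [if_pos h, if_neg (lt_asymm h)]

lemma relB (hV : Fintype.card V = n + 3) {v w u : V} (hvw : v ≠ w)
    (hu1 : u ∈ ({v}ᶜ : Finset V)) (hu2 : u ∈ ({w}ᶜ : Finset V))
    (hu12 : u ∈ ({v, w}ᶜ : Finset V)) :
    NN G n hV v u hu1 - NN G n hV w u hu2 ∈ Rng G n := by
  show _ ∈ LinearMap.range (uberd ℤ (graphComplex G) 0 (n + 1))
  rw [LinearMap.mem_range]
  set a1 := ((({v, w}ᶜ : Finset V)).filter (· < v)).card with ha1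
  set a2 := ((({v, w}ᶜ : Finset V)).filter (· < w)).card with ha2
  refine ⟨((-1 : ℤ) ^ (a1 + a2 + (if w < v then 1 else 0))) •
    E (graphComplex G) (n + 1) {v, w}ᶜ (cardCompl2 n hV hvw) u hu12, ?_⟩
  rw [map_smul, ddE (graphComplex G) (n + 1) hvw u (cardCompl2 n hV hvw)
    (cardCompl1 n hV w) (cardCompl1 n hV v) hu12 hu2 hu1]
  rw [smul_add, smul_smul, smul_smul]
  have e1 : a1 + (if w < v then 1 else 0) = pv v := filterlt_pair hvw
  have e2 : a2 + (if v < w then 1 else 0) = pv w := by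
    have h := filterlt_pair (V := V) hvw.symm
    rwa [Finset.pair_comm w v] at h
  have hc := ite_lt_sum (V := V) hvw
  have h1 : (-1 : ℤ) ^ (a1 + a2 + (if w < v then 1 else 0)) * (-1) ^ a1 =
      (-1 : ℤ) ^ (pv w + 1) := by
    rw [← pow_add]
    exact pow_neg_one_congr (by omega)
  have h2 : (-1 : ℤ) ^ (a1 + a2 + (if w < v then 1 else 0)) * (-1) ^ a2 =
      (-1 : ℤ) ^ (pv v) := by
    rw [← pow_add]
    exact pow_neg_one_congr (by omega)
  rw [h1, h2, pow_succ, mul_neg_one, neg_smul]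
  abel

lemma relB' (hV : Fintype.card V = n + 3) {v v' u : V}
    (hu : u ∈ ({v}ᶜ : Finset V)) (hu' : u ∈ ({v'}ᶜ : Finset V)) :
    NN G n hV v u hu - NN G n hV v' u hu' ∈ Rng G n := by
  by_cases hvv' : v = v'
  · subst hvv'
    have : NN G n hV v u hu = NN G n hV v u hu' := rfl
    rw [this, sub_self]
    exact zero_mem _
  · have hu12 : u ∈ ({v, v'}ᶜ : Finset V) := by
      simp only [Finset.mem_compl, Finset.mem_insert, Finset.mem_singleton] at hu hu' ⊢
      tauto
    exact relB G n hV hvv' hu hu' hu12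

lemma relA (hV : Fintype.card V = n + 3) {a b z : V} (hadj : G.Adj a b)
    (ha : a ∈ ({z}ᶜ : Finset V)) (hb : b ∈ ({z}ᶜ : Finset V)) :
    NN G n hV z a ha = NN G n hV z b hb := by
  rw [NN, NN, E_edge G (n + 2) hadj (cardCompl1 n hV z) ha hb]

lemma exists_notin_pair (hV : Fintype.card V = n + 3) (a b : V) :
    ∃ z : V, z ≠ a ∧ z ≠ b := by
  by_contra hcon
  push_neg at hcon
  have hsub : (Finset.univ : Finset V) ⊆ {a, b} := by
    intro z _
    by_cases hz : z = a
    · simp [hz]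
    · simp [hcon z hz]
  have h1 := Finset.card_le_card hsub
  have h2 : ({a, b} : Finset V).card ≤ 2 :=
    le_trans (Finset.card_insert_le a {b}) (by simp)
  rw [Finset.card_univ, hV] at h1
  omega

lemma keyWalk (hV : Fintype.card V = n + 3) {u u' : V} (w : G.Walk u u') :
    ∀ (v v' : V) (hu : u ∈ ({v}ᶜ : Finset V)) (hu' : u' ∈ ({v'}ᶜ : Finset V)),
      NN G n hV v u hu - NN G n hV v' u' hu' ∈ Rng G n := by
  induction w with
  | nil =>
    intro v v' hu hu'
    exact relB' G n hV hu hu'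
  | @cons a b c hadj p ih =>
    intro v v' hu hu'
    obtain ⟨z, hza, hzb⟩ := exists_notin_pair n hV a b
    have haz : a ∈ ({z}ᶜ : Finset V) := by
      simp only [Finset.mem_compl, Finset.mem_singleton]
      exact hza.symm
    have hbz : b ∈ ({z}ᶜ : Finset V) := by
      simp only [Finset.mem_compl, Finset.mem_singleton]
      exact hzb.symm
    have h1 : NN G n hV v a hu - NN G n hV z a haz ∈ Rng G n := relB' G n hV hu haz
    have h2 : NN G n hV z a haz = NN G n hV z b hbz := relA G n hV hadj haz hbz
    have h3 : NN G n hV z b hbz - NN G n hV v' c hu' ∈ Rng G n := ih z v' hbz hu'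
    have h4 := add_mem h1 h3
    rw [h2, sub_add_sub_cancel] at h4
    exact h4

/-- The evaluation functional in top degree. -/
def Phi (hV : Fintype.card V = n + 3) :
    UC ℤ (graphComplex G) 0 (n + 3) →ₗ[ℤ] ℤ :=
  (phiL (graphComplex G) Finset.univ).comp
    (DirectSum.component ℤ {S : Finset V // S.card = n + 3}
      (fun T => simpH ℤ ((graphComplex G).induced T.1) 0)
      ⟨Finset.univ, cardUniv n hV⟩)

lemma Phi_E (hV : Fintype.card V = n + 3)
    (hU : (Finset.univ : Finset V).card = n + 3) (u : V) (hu : u ∈ (Finset.univ : Finset V)) :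
    Phi G n hV (E (graphComplex G) (n + 3) Finset.univ hU u hu) = 1 := by
  show phiL (graphComplex G) Finset.univ (DirectSum.component ℤ {S : Finset V // S.card = n + 3}
      (fun T => simpH ℤ ((graphComplex G).induced T.1) 0)
      ⟨Finset.univ, cardUniv n hV⟩ (E (graphComplex G) (n + 3) Finset.univ hU u hu)) = 1
  have h1 : (DirectSum.component ℤ {S : Finset V // S.card = n + 3}
      (fun T => simpH ℤ ((graphComplex G).induced T.1) 0)
      ⟨Finset.univ, cardUniv n hV⟩)
      (E (graphComplex G) (n + 3) Finset.univ hU u hu) =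
      clsL (graphComplex G) Finset.univ (vtx (graphComplex G) Finset.univ u hu) :=
    DirectSum.component.lof_self (R := ℤ) _ _
  refine Eq.trans (congrArg (phiL (graphComplex G) Finset.univ) h1) ?_
  rw [phiL_clsL]
  exact augment_vtx _ _ u hu

lemma Phi_d_E (hV : Fintype.card V = n + 3) (v u : V) (hu : u ∈ ({v}ᶜ : Finset V)) :
    Phi G n hV (uberd ℤ (graphComplex G) 0 (n + 2)
      (E (graphComplex G) (n + 2) {v}ᶜ (cardCompl1 n hV v) u hu)) = (-1 : ℤ) ^ pv v := by
  rw [duE (graphComplex G) (n + 2) v u (cardCompl1 n hV v) (cardUniv n hV) hu,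
    map_smul, Phi_E G n hV (cardUniv n hV) u (Finset.mem_univ u)]
  simp

lemma Phi_d_NN (hV : Fintype.card V = n + 3) (v u : V) (hu : u ∈ ({v}ᶜ : Finset V)) :
    Phi G n hV (uberd ℤ (graphComplex G) 0 (n + 2) (NN G n hV v u hu)) = 1 := by
  rw [NN, map_smul, map_smul, Phi_d_E G n hV v u hu, smul_eq_mul, ← pow_add,
    show pv v + pv v = 2 * pv v by ring, pow_mul]
  norm_num

end Graph
lemma UC_span_induction (X : SComplex V) (j : ℕ) (P : Submodule ℤ (UC ℤ X 0 j))
    (hgen : ∀ (S : Finset V) (hS : S.card = j) (u : V) (hu : u ∈ S),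
      E X j S hS u hu ∈ P) :
    ∀ x : UC ℤ X 0 j, x ∈ P := by
  intro x
  refine DirectSum.induction_on x (zero_mem _) (fun i y => ?_)
    (fun a b ha hb => add_mem ha hb)
  obtain ⟨S, hS⟩ := i
  obtain ⟨c, rfl⟩ := clsL_surjective X S y
  show lofU X j S hS (clsL X S c) ∈ P
  induction c using Finsupp.induction_linear with
  | zero =>
    show lofU X j S hS (clsL X S 0) ∈ P
    simpa using zero_mem P
  | add f g hf hg =>
    show lofU X j S hS (clsL X S (@HAdd.hAdd (Chains ℤ (X.induced S) 1)
      (Chains ℤ (X.induced S) 1) _ _ f g)) ∈ P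
    exact (congrArg (· ∈ P) ((congrArg (lofU X j S hS) (map_add (clsL X S) f g)).trans
      (map_add _ _ _))).mpr (add_mem hf hg)
  | single σ r =>
    obtain ⟨σv, hσ⟩ := σ
    obtain ⟨u, rfl⟩ := Finset.card_eq_one.mp hσ.2
    have hu : u ∈ S :=
      Finset.singleton_subset_iff.mp (Finset.mem_filter.mp hσ.1).2
    have hvtx : Finsupp.single (⟨{u}, hσ⟩ :
        {σ : Finset V // σ ∈ X.induced S ∧ σ.card = 1}) r = r • vtx X S u hu := by
      rw [vtx]
      erw [Finsupp.smul_single, smul_eq_mul, mul_one]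
    rw [hvtx, map_smul, map_smul]
    exact Submodule.smul_mem P r (hgen S hS u hu)

variable (G : SimpleGraph V) (n : ℕ)

lemma top_surj (hV : Fintype.card V = n + 3) :
    ∀ x : UC ℤ (graphComplex G) 0 (n + 3),
      x ∈ LinearMap.range (uberd ℤ (graphComplex G) 0 (n + 2)) := by
  refine UC_span_induction _ _ _ ?_
  intro S hS u hu
  have hSu : S = Finset.univ := Finset.eq_univ_of_card S (by rw [hS, hV])
  subst hSu
  have hnt : Nontrivial V := Fintype.one_lt_card_iff_nontrivial.mp (by rw [hV]; omega)
  obtain ⟨v, hv⟩ := exists_ne u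
  have huv : u ∈ ({v}ᶜ : Finset V) := by
    simp only [Finset.mem_compl, Finset.mem_singleton]
    exact fun h => hv (h ▸ rfl)
  refine LinearMap.mem_range.mpr ?_
  refine ⟨((-1 : ℤ) ^ pv v) • E (graphComplex G) (n + 2) {v}ᶜ (cardCompl1 n hV v) u huv, ?_⟩
  rw [map_smul, duE (graphComplex G) (n + 2) v u (cardCompl1 n hV v) hS huv,
    smul_smul, ← pow_add, show pv v + pv v = 2 * pv v by ring, pow_mul]
  norm_num

lemma PhiDD (hV : Fintype.card V = n + 3) :
    ∀ x : UC ℤ (graphComplex G) 0 (n + 1),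
      Phi G n hV (uberd ℤ (graphComplex G) 0 (n + 2)
        (uberd ℤ (graphComplex G) 0 (n + 1) x)) = 0 := by
  have key := UC_span_induction (graphComplex G) (n + 1)
    (LinearMap.ker ((Phi G n hV).comp
      ((uberd ℤ (graphComplex G) 0 (n + 2)).comp (uberd ℤ (graphComplex G) 0 (n + 1)))))
    ?_
  · intro x
    have hx := key x
    exact hx
  · intro S hS u hu
    have hc2 : (Sᶜ).card = 2 := by rw [Finset.card_compl, hS, hV]; omega
    obtain ⟨v, w, hvw, hc⟩ := Finset.card_eq_two.mp hc2
    have hSvw : S = ({v, w}ᶜ : Finset V) := by rw [← hc, compl_compl]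
    subst hSvw
    have huvw := Finset.mem_compl.mp hu
    have huv : u ∈ ({v}ᶜ : Finset V) := by
      simp only [Finset.mem_compl, Finset.mem_singleton]
      intro h
      exact huvw (by simp [h])
    have huw : u ∈ ({w}ᶜ : Finset V) := by
      simp only [Finset.mem_compl, Finset.mem_singleton]
      intro h
      exact huvw (by simp [h])
    show Phi G n hV (uberd ℤ (graphComplex G) 0 (n + 2) (uberd ℤ (graphComplex G) 0 (n + 1)
      (E (graphComplex G) (n + 1) {v, w}ᶜ hS u hu))) = 0
    rw [ddE (graphComplex G) (n + 1) hvw u hS (cardCompl1 n hV w) (cardCompl1 n hV v)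
      hu huw huv]
    rw [map_add, map_smul, map_smul, map_add, map_smul, map_smul]
    rw [Phi_d_E G n hV w u huw, Phi_d_E G n hV v u huv]
    set a1 := ((({v, w}ᶜ : Finset V)).filter (· < v)).card with ha1
    set a2 := ((({v, w}ᶜ : Finset V)).filter (· < w)).card with ha2
    have e1 : a1 + (if w < v then 1 else 0) = pv v := filterlt_pair hvw
    have e2 : a2 + (if v < w then 1 else 0) = pv w := by
      have h := filterlt_pair (V := V) hvw.symm
      rwa [Finset.pair_comm w v] at h
    have hc' := ite_lt_sum (V := V) hvw
    rw [smul_eq_mul, smul_eq_mul, ← pow_add, ← pow_add]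
    have hA : (-1 : ℤ) ^ (a1 + pv w) = (-1 : ℤ) ^ ((a2 + pv v) + 1) :=
      pow_neg_one_congr (by omega)
    rw [hA, pow_succ, mul_neg_one]
    ring

lemma mem_P (hV : Fintype.card V = n + 3) (hconn : G.Connected) (v0 u0 : V)
    (h0 : u0 ∈ ({v0}ᶜ : Finset V)) :
    ∀ x : UC ℤ (graphComplex G) 0 (n + 2),
      x ∈ Rng G n ⊔ Submodule.span ℤ {NN G n hV v0 u0 h0} := by
  refine UC_span_induction _ _ _ ?_
  intro S hS u hu
  have hc1 : (Sᶜ).card = 1 := by rw [Finset.card_compl, hS, hV]; omega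
  obtain ⟨v, hc⟩ := Finset.card_eq_one.mp hc1
  have hSv : S = ({v}ᶜ : Finset V) := by rw [← hc, compl_compl]
  subst hSv
  rw [show E (graphComplex G) (n + 2) {v}ᶜ hS u hu = ((-1 : ℤ) ^ pv v) • NN G n hV v u hu
    from (smul_NN G n hV v u hu).symm]
  refine Submodule.smul_mem _ _ ?_
  obtain ⟨wlk⟩ : G.Reachable u u0 := hconn.preconnected u u0
  have hdiff := keyWalk G n hV wlk v v0 hu h0
  have hsplit : NN G n hV v u hu =
      (NN G n hV v u hu - NN G n hV v0 u0 h0) + NN G n hV v0 u0 h0 := by abel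
  rw [hsplit]
  exact add_mem (Submodule.mem_sup_left hdiff)
    (Submodule.mem_sup_right (Submodule.mem_span_singleton_self _))
end UberAux

end Aux

open UberAux in
/-- For a connected triangle-free graph `G` on `m ≥ 3` vertices,
`𝔹^m(G;ℤ) = 0` and `𝔹^{m-1}(G;ℤ) = 0`. -/
theorem bold_top_degrees_trivial_of_triangleFree (V : Type) [Fintype V] [LinearOrder V]
    (G : SimpleGraph V) (m : ℕ) (hm : Fintype.card V = m) (hm3 : 3 ≤ m)
    (hconn : G.Connected) (htf : TriangleFree G) :
    Subsingleton (Bold ℤ (graphComplex G) m) ∧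
      Subsingleton (Bold ℤ (graphComplex G) (m - 1)) := by
  obtain ⟨n, rfl⟩ : ∃ n, m = n + 3 := ⟨m - 3, by omega⟩
  have hV : Fintype.card V = n + 3 := hm
  constructor
  · -- top degree
    have htop : uberBdriesIn ℤ (graphComplex G) 0 (n + 3) = ⊤ := by
      rw [eq_top_iff]
      rintro ⟨x, hx⟩ -
      simp only [uberBdriesIn, Submodule.mem_comap, Submodule.mem_inf,
        Submodule.coe_subtype]
      refine ⟨?_, hx⟩
      show x ∈ LinearMap.range (uberd ℤ (graphComplex G) 0 (n + 2))
      exact top_surj G n hV x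
    exact Submodule.Quotient.subsingleton_iff.mpr htop
  · -- degree m - 1 = n + 2
    have hred : n + 3 - 1 = n + 2 := rfl
    rw [hred]
    have htop : uberBdriesIn ℤ (graphComplex G) 0 (n + 2) = ⊤ := by
      rw [eq_top_iff]
      rintro ⟨x, hx⟩ -
      simp only [uberBdriesIn, Submodule.mem_comap, Submodule.mem_inf,
        Submodule.coe_subtype]
      refine ⟨?_, hx⟩
      -- decompose x
      obtain ⟨u0, v0, h00⟩ := Fintype.exists_pair_of_one_lt_card (by rw [hV]; omega : 1 < Fintype.card V)
      have h0 : u0 ∈ ({v0}ᶜ : Finset V) := by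
        simp only [Finset.mem_compl, Finset.mem_singleton]
        exact h00
      have hx' := mem_P G n hV hconn v0 u0 h0 x
      rw [Submodule.mem_sup] at hx'
      obtain ⟨y, hy, z, hz, hyz⟩ := hx'
      rw [Submodule.mem_span_singleton] at hz
      obtain ⟨a, rfl⟩ := hz
      have hker : uberd ℤ (graphComplex G) 0 (n + 2) x = 0 := hx
      have h1 : Phi G n hV (uberd ℤ (graphComplex G) 0 (n + 2) x) = 0 := by
        rw [hker, map_zero]
      obtain ⟨y', rfl⟩ := LinearMap.mem_range.mp hy
      have h2 : Phi G n hV (uberd ℤ (graphComplex G) 0 (n + 2) x) =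
          Phi G n hV (uberd ℤ (graphComplex G) 0 (n + 2)
            (uberd ℤ (graphComplex G) 0 (n + 1) y')) +
          a * Phi G n hV (uberd ℤ (graphComplex G) 0 (n + 2) (NN G n hV v0 u0 h0)) := by
        rw [← hyz, map_add, map_add, map_smul, map_smul, smul_eq_mul]
        rfl
      rw [PhiDD G n hV y', Phi_d_NN G n hV v0 u0 h0, h1] at h2
      have ha : a = 0 := by omega
      rw [ha, zero_smul, add_zero] at hyz
      show x ∈ LinearMap.range (uberd ℤ (graphComplex G) 0 (n + 1))
      exact ⟨y', hyz⟩
    exact Submodule.Quotient.subsingleton_iff.mpr htop
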